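/- arXiv:1810.02377 — 3 statements merged into one kernel-verified Lean document; each statement's English description precedes it below -/
import Mathlib

section
/- Let d ≥ 1 be an integer and let A = (ℤ/3dℤ) × (ℤ/3dℤ). For P ∈ A, there exists t ∈ A with 3·t = 0 and the additive order of P − t equal to 3d if and only if either the additive order of P equals 3d, or 3 does not divide d and the additive order of P equals d. -/
lemma aux_ord_coe_d (d : ℕ) (hd : 1 ≤ d) :
    addOrderOf ((d : ZMod (3 * d))) = 3 := by
  rw [ZMod.addOrderOf_coe d (by omega : 3 * d ≠ 0)]
  rw [Nat.gcd_comm, Nat.gcd_eq_left ⟨3, by ring⟩]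
  exact Nat.mul_div_cancel (m := 3) hd

lemma aux_shift (d : ℕ) (hd : 1 ≤ d) (h3 : ¬ (3 ∣ d)) (a : ZMod (3 * d))
    (ha : addOrderOf a ∣ d) :
    addOrderOf (a - (d : ZMod (3 * d))) = addOrderOf a * 3 := by
  have hneg : addOrderOf (-(d : ZMod (3 * d))) = 3 := by
    rw [addOrderOf_neg]; exact aux_ord_coe_d d hd
  have hco : (addOrderOf a).Coprime (addOrderOf (-(d : ZMod (3 * d)))) := by
    rw [hneg, Nat.coprime_comm]
    exact (Nat.prime_three.coprime_iff_not_dvd).mpr (fun h => h3 (h.trans ha))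
  have := AddCommute.addOrderOf_add_eq_mul_addOrderOf_of_coprime
    (AddCommute.all a (-(d : ZMod (3 * d)))) hco
  rw [sub_eq_add_neg, this, hneg]

/-- Group-theoretic form of the equivalence (2)⇔(3) in Lemma 4.6:
in `A = (ℤ/3d) × (ℤ/3d)`, there is a `3`-torsion element `t` with `P - t`
of order `3d` iff `P` has order `3d`, or `3 ∤ d` and `P` has order `d`. -/
theorem stmt_2 (d : ℕ) (hd : 1 ≤ d)
    (P : ZMod (3 * d) × ZMod (3 * d)) :
    (∃ t : ZMod (3 * d) × ZMod (3 * d), 3 • t = 0 ∧ addOrderOf (P - t) = 3 * d) ↔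
      (addOrderOf P = 3 * d ∨ (¬ (3 ∣ d) ∧ addOrderOf P = d)) := by
  haveI : NeZero (3 * d) := ⟨by omega⟩
  constructor
  · rintro ⟨t, ht3, htord⟩
    have hot : addOrderOf t ∣ 3 := addOrderOf_dvd_of_nsmul_eq_zero ht3
    have hont : addOrderOf (-t) ∣ 3 := by
      apply addOrderOf_dvd_of_nsmul_eq_zero
      rw [smul_neg, ht3, neg_zero]
    -- m ∣ 3 * d
    have hm3d : addOrderOf P ∣ 3 * d := by
      have h1 := AddCommute.addOrderOf_add_dvd_lcm (AddCommute.all (P - t) t)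
      rw [sub_add_cancel, htord] at h1
      exact h1.trans (Nat.lcm_dvd dvd_rfl (hot.trans ⟨d, rfl⟩))
    -- d ∣ m
    have hdm : d ∣ addOrderOf P := by
      have h1 := AddCommute.addOrderOf_add_dvd_lcm (AddCommute.all P (-t))
      rw [← sub_eq_add_neg, htord] at h1
      have h2 : 3 * d ∣ 3 * addOrderOf P :=
        h1.trans (Nat.lcm_dvd (dvd_mul_left _ 3) (hont.trans ⟨addOrderOf P, rfl⟩))
      exact (Nat.mul_dvd_mul_iff_left (by omega : 0 < 3)).mp h2
    obtain ⟨k, hk⟩ := hdm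
    have hk3 : k ∣ 3 := by
      have : d * k ∣ d * 3 := by rw [← hk, mul_comm d 3]; exact hm3d
      exact (Nat.mul_dvd_mul_iff_left (by omega : 0 < d)).mp this
    rcases (Nat.dvd_prime Nat.prime_three).mp hk3 with hk1 | hk3'
    · -- m = d; show 3 ∤ d
      right
      have hmd : addOrderOf P = d := by rw [hk, hk1, mul_one]
      refine ⟨fun h3d => ?_, hmd⟩
      have h1 := AddCommute.addOrderOf_add_dvd_lcm (AddCommute.all P (-t))
      rw [← sub_eq_add_neg, htord] at h1
      have h2 : 3 * d ∣ d := h1.trans (Nat.lcm_dvd hmd.dvd (hont.trans h3d))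
      have := Nat.le_of_dvd (by omega) h2
      omega
    · left; rw [hk, hk3']; exact mul_comm d 3
  · rintro (h | ⟨h3, hPd⟩)
    · exact ⟨0, by simp, by simpa using h⟩
    · refine ⟨((d : ZMod (3 * d)), (d : ZMod (3 * d))), ?_, ?_⟩
      · have h1 : (3 : ℕ) • ((d : ZMod (3 * d))) = 0 := by
          rw [nsmul_eq_mul, ← Nat.cast_ofNat, ← Nat.cast_mul, ZMod.natCast_self]
        exact Prod.ext h1 h1
      · have hlcm : Nat.lcm (addOrderOf P.1) (addOrderOf P.2) = d := by
          rw [← Prod.addOrderOf]; exact hPd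
        have h1 : addOrderOf P.1 ∣ d := by
          have := Nat.dvd_lcm_left (addOrderOf P.1) (addOrderOf P.2)
          rwa [hlcm] at this
        have h2 : addOrderOf P.2 ∣ d := by
          have := Nat.dvd_lcm_right (addOrderOf P.1) (addOrderOf P.2)
          rwa [hlcm] at this
        have hP1 := aux_shift d hd h3 P.1 h1
        have hP2 := aux_shift d hd h3 P.2 h2
        have hsub : P - ((d : ZMod (3 * d)), (d : ZMod (3 * d)))
            = (P.1 - (d : ZMod (3 * d)), P.2 - (d : ZMod (3 * d))) := rfl
        rw [hsub, Prod.addOrderOf_mk, hP1, hP2, Nat.lcm_mul_right, hlcm]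
        omega
end

section
/- Let w ≥ 2 and l ≥ 1 be integers. Then Σ_{k ∣ l} μ(k) · (−1)^{(k−1)·l·w/k} · C((l/k)(w−1)−1, (l/k)−1) = Σ_{d ∣ l} μ(l/d) · (−1)^{(w−2)(l−d)} · C(d(w−1)−1, d−1). Equivalently, the multiple cover contribution contr^BPS(l,C) := Σ_{k ∣ l} ((−1)^{(k−1)·l·w/k}/k²) μ(k) · (1/(l/k)²) C((l/k)(w−1)−1, (l/k)−1) equals the l-th generalized Donaldson–Thomas invariant DT_l^{(w−1)} = (1/l²) Σ_{d ∣ l} μ(l/d) (−1)^{(w−2)(l−d)} C(d(w−1)−1, d−1) of the (w−1)-loop quiver. -/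
/-! Substituting the complementary divisor `d = l / k` turns the sign exponent `(k - 1) (l / k) w`
into `(l - d) w`, which has the parity of `(w - 2) (l - d)`. The rational form follows term by
term, since `k² (l / k)² = l²`. -/

open scoped ArithmeticFunction.Moebius

theorem neg_one_pow_mul_eq_pow_sub_two_mul {R : Type*} [Monoid R] [HasDistribNeg R]
    (n w : ℕ) (hw : 2 ≤ w) : (-1 : R) ^ (n * w) = (-1) ^ ((w - 2) * n) := by
  obtain ⟨v, rfl⟩ : ∃ v, w = v + 2 := ⟨w - 2, by omega⟩
  rw [Nat.add_sub_cancel, mul_add, pow_add, mul_comm n 2, pow_mul (-1 : R) 2 n, neg_one_sq,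
    one_pow, mul_one, mul_comm]

theorem sum_moebius_neg_one_pow_choose_eq {R : Type*} [CommRing R] (w l : ℕ) (hw : 2 ≤ w) :
    ∑ k ∈ l.divisors, ((μ k : ℤ) : R) * (-1) ^ ((k - 1) * (l / k) * w) *
        ((l / k * (w - 1) - 1).choose (l / k - 1) : R)
      = ∑ d ∈ l.divisors, ((μ (l / d) : ℤ) : R) * (-1) ^ ((w - 2) * (l - d)) *
        ((d * (w - 1) - 1).choose (d - 1) : R) := by
  rw [← Nat.sum_div_divisors]
  refine Finset.sum_congr rfl fun d hd => ?_
  obtain ⟨hdl, hl⟩ := Nat.mem_divisors.mp hd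
  have hcompl : (l / d - 1) * d = l - d := by
    rw [Nat.sub_one_mul, Nat.div_mul_cancel hdl]
  rw [Nat.div_div_self hdl hl, hcompl, neg_one_pow_mul_eq_pow_sub_two_mul _ _ hw]

theorem stmt_4_general (w l : ℕ) (hw : 2 ≤ w) :
    (∑ k ∈ l.divisors,
        (ArithmeticFunction.moebius k : ℤ) * (-1) ^ ((k - 1) * (l / k) * w) *
          (Nat.choose ((l / k) * (w - 1) - 1) (l / k - 1) : ℤ)
      = ∑ d ∈ l.divisors,
        (ArithmeticFunction.moebius (l / d) : ℤ) * (-1) ^ ((w - 2) * (l - d)) *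
          (Nat.choose (d * (w - 1) - 1) (d - 1) : ℤ))
    ∧
    (∑ k ∈ l.divisors,
        ((-1 : ℚ) ^ ((k - 1) * (l / k) * w) / (k : ℚ) ^ 2) *
          ((ArithmeticFunction.moebius k : ℤ) : ℚ) *
          ((1 : ℚ) / (((l / k : ℕ) : ℚ)) ^ 2) *
          (Nat.choose ((l / k) * (w - 1) - 1) (l / k - 1) : ℚ)
      = (1 / (l : ℚ) ^ 2) *
        ∑ d ∈ l.divisors,
          ((ArithmeticFunction.moebius (l / d) : ℤ) : ℚ) *
            (-1 : ℚ) ^ ((w - 2) * (l - d)) *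
            (Nat.choose (d * (w - 1) - 1) (d - 1) : ℚ)) := by
  refine ⟨by simpa using sum_moebius_neg_one_pow_choose_eq (R := ℤ) w l hw, ?_⟩
  rw [← sum_moebius_neg_one_pow_choose_eq w l hw, Finset.mul_sum]
  refine Finset.sum_congr rfl fun k hk => ?_
  obtain ⟨hdvd, hl0⟩ := Nat.mem_divisors.mp hk
  have hl : (l : ℚ) = k * (l / k : ℕ) := by exact_mod_cast (Nat.mul_div_cancel' hdvd).symm
  obtain ⟨hk0, hlk0⟩ := mul_ne_zero_iff.mp (hl ▸ Nat.cast_ne_zero.mpr hl0)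
  rw [hl]
  field_simp

/-- Proposition 6.3: the multiple cover contribution to the log BPS number
of an integral nodal rational curve of tangency `w = C.E ≥ 2` equals the
`l`-th generalized DT invariant of the `(w-1)`-loop quiver; first in the
`l²`-cleared integral form, then in the original rational form. -/
theorem stmt_4 (w l : ℕ) (hw : 2 ≤ w) (hl : 1 ≤ l) :
    (∑ k ∈ l.divisors,
        (ArithmeticFunction.moebius k : ℤ) * (-1) ^ ((k - 1) * (l / k) * w) *
          (Nat.choose ((l / k) * (w - 1) - 1) (l / k - 1) : ℤ)
      = ∑ d ∈ l.divisors,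
        (ArithmeticFunction.moebius (l / d) : ℤ) * (-1) ^ ((w - 2) * (l - d)) *
          (Nat.choose (d * (w - 1) - 1) (d - 1) : ℤ))
    ∧
    (∑ k ∈ l.divisors,
        ((-1 : ℚ) ^ ((k - 1) * (l / k) * w) / (k : ℚ) ^ 2) *
          ((ArithmeticFunction.moebius k : ℤ) : ℚ) *
          ((1 : ℚ) / (((l / k : ℕ) : ℚ)) ^ 2) *
          (Nat.choose ((l / k) * (w - 1) - 1) (l / k - 1) : ℚ)
      = (1 / (l : ℚ) ^ 2) *
        ∑ d ∈ l.divisors,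
          ((ArithmeticFunction.moebius (l / d) : ℤ) : ℚ) *
            (-1 : ℚ) ^ ((w - 2) * (l - d)) *
            (Nat.choose (d * (w - 1) - 1) (d - 1) : ℚ)) :=
  stmt_4_general w l hw
end

section
/- Let d ≥ 1 be an integer with 3 ∤ d and let A = (ℤ/3dℤ) × (ℤ/3dℤ). If x, y ∈ A each have additive order equal to d or to 3d, then there exists t ∈ A with 3·t = 0 such that both x + t and y + t have additive order exactly 3d. -/
/-!
Since `3 ∤ d`, tripling kills the `3`-torsion part of `z` but not its order-`d` part, so for any
`3`-torsion `t` the order of `z + t` is a multiple of `d` dividing `3d`: it is `3d` exactly when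
`d • (z + t) ≠ 0`. As `d² ≡ 1 (mod 3)`, we have `d • (d • c) = c` for `3`-torsion `c`, so with
`t = d • c` the only bad choices are `c = -(d • x)` and `c = -(d • y)`, while the `3`-torsion of
`(ℤ/3d)²` has more than two elements.
-/

section AddCommGroup

variable {G : Type*} [AddCommGroup G] {p n : ℕ}

lemma addOrderOf_eq_prime_mul_iff (hp : p.Prime) (hn : n ≠ 0) {w : G}
    (hdvd : n ∣ addOrderOf w) (hdvd' : addOrderOf w ∣ p * n) :
    addOrderOf w = p * n ↔ n • w ≠ 0 := by
  obtain ⟨m, hm⟩ := hdvd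
  have hmp : m ∣ p :=
    (Nat.mul_dvd_mul_iff_left (Nat.pos_of_ne_zero hn)).mp (by rwa [← hm, mul_comm n p])
  rw [ne_eq, ← addOrderOf_dvd_iff_nsmul_eq_zero, hm]
  have hp2 := hp.two_le
  rcases hp.eq_one_or_self_of_dvd m hmp with rfl | rfl
  · have : n ≠ p * n := by nlinarith [Nat.pos_of_ne_zero hn]
    simp [this]
  · refine ⟨fun _ h => ?_, fun _ => mul_comm n m⟩
    have := Nat.le_of_dvd (Nat.pos_of_ne_zero hn) h
    nlinarith [Nat.pos_of_ne_zero hn]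

lemma addOrderOf_prime_nsmul (hp : p.Prime) (hpn : ¬ p ∣ n) {z : G}
    (hz : addOrderOf z = n ∨ addOrderOf z = p * n) : addOrderOf (p • z) = n := by
  rw [addOrderOf_nsmul' z hp.ne_zero]
  rcases hz with hz | hz <;> rw [hz]
  · rw [(Nat.coprime_comm.mp ((hp.coprime_iff_not_dvd).mpr hpn)).gcd_eq_one, Nat.div_one]
  · rw [Nat.gcd_mul_right_left, Nat.mul_div_cancel_left _ hp.pos]

lemma addOrderOf_add_eq_prime_mul_iff (hp : p.Prime) (hpn : ¬ p ∣ n) {z t : G}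
    (hz : addOrderOf z = n ∨ addOrderOf z = p * n) (ht : p • t = 0) :
    addOrderOf (z + t) = p * n ↔ n • (z + t) ≠ 0 := by
  have hn : n ≠ 0 := by rintro rfl; exact hpn (dvd_zero p)
  refine addOrderOf_eq_prime_mul_iff hp hn ?_ ?_
  · have h : p • (z + t) = p • z := by rw [smul_add, ht, add_zero]
    rw [← addOrderOf_prime_nsmul hp hpn hz, ← h]
    exact addOrderOf_smul_dvd _
  · refine addOrderOf_dvd_of_nsmul_eq_zero ?_
    have hz' : addOrderOf z ∣ p * n := by rcases hz with hz | hz <;> simp [hz]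
    rw [smul_add, addOrderOf_dvd_iff_nsmul_eq_zero.mp hz', mul_nsmul, ht, smul_zero, add_zero]

lemma nsmul_nsmul_self_of_three_nsmul_eq_zero {c : G} (hc : 3 • c = 0) (hn : ¬ 3 ∣ n) :
    n • n • c = c := by
  have hsq : n * n % 3 = 1 := by
    rw [Nat.mul_mod]
    rcases (by omega : n % 3 = 1 ∨ n % 3 = 2) with h | h <;> rw [h]
  rw [← mul_nsmul', ← Nat.div_add_mod (n * n) 3, hsq, add_nsmul, mul_nsmul, hc, smul_zero,
    zero_add, one_nsmul]

end AddCommGroup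

lemma exists_three_nsmul_eq_zero_ne {d : ℕ} (hd : d ≠ 0) (a b : ZMod (3 * d) × ZMod (3 * d)) :
    ∃ c : ZMod (3 * d) × ZMod (3 * d), 3 • c = 0 ∧ c ≠ a ∧ c ≠ b := by
  have hd3 : 3 • (d : ZMod (3 * d)) = 0 := by
    rw [nsmul_eq_mul, ← Nat.cast_ofNat, ← Nat.cast_mul, ZMod.natCast_self]
  have hd0 : (d : ZMod (3 * d)) ≠ 0 := by
    rw [Ne, ZMod.natCast_eq_zero_iff]
    intro h
    have := Nat.le_of_dvd (Nat.pos_of_ne_zero hd) h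
    omega
  classical
  obtain ⟨c, hc, hcab⟩ := Finset.exists_mem_notMem_of_card_lt_card
    (s := {a, b}) (t := {0, ((d : ZMod (3 * d)), 0), (0, (d : ZMod (3 * d)))}) (by
      refine Finset.card_le_two.trans_lt ?_
      rw [Finset.card_insert_of_notMem, Finset.card_pair] <;> simp [Prod.ext_iff, hd0, hd0.symm])
  refine ⟨c, ?_, by simpa [not_or] using hcab⟩
  simp only [Finset.mem_insert, Finset.mem_singleton] at hc
  rcases hc with rfl | rfl | rfl <;> simp [hd3]

theorem stmt_6_general (d : ℕ) (h3 : ¬ (3 ∣ d))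
    (x y : ZMod (3 * d) × ZMod (3 * d))
    (hx : addOrderOf x = d ∨ addOrderOf x = 3 * d)
    (hy : addOrderOf y = d ∨ addOrderOf y = 3 * d) :
    ∃ t : ZMod (3 * d) × ZMod (3 * d), 3 • t = 0 ∧
      addOrderOf (x + t) = 3 * d ∧ addOrderOf (y + t) = 3 * d := by
  have hd : d ≠ 0 := by rintro rfl; exact h3 (dvd_zero 3)
  obtain ⟨c, hc, hcx, hcy⟩ := exists_three_nsmul_eq_zero_ne hd (-(d • x)) (-(d • y))
  have ht : 3 • d • c = 0 := by rw [smul_comm, hc, smul_zero]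
  have hdt : d • d • c = c := nsmul_nsmul_self_of_three_nsmul_eq_zero hc h3
  refine ⟨d • c, ht, ?_, ?_⟩
  · rw [addOrderOf_add_eq_prime_mul_iff Nat.prime_three h3 hx ht, smul_add, hdt]
    exact fun h => hcx (eq_neg_of_add_eq_zero_right h)
  · rw [addOrderOf_add_eq_prime_mul_iff Nat.prime_three h3 hy ht, smul_add, hdt]
    exact fun h => hcy (eq_neg_of_add_eq_zero_right h)

/-- 'Choice of flex' claim in the proof of Lemma 5.2: if `3 ∤ d` and
`x, y ∈ (ℤ/3d)²` each have order `d` or `3d`, then some common `3`-torsion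
translate makes both of exact order `3d`. -/
theorem stmt_6 (d : ℕ) (hd : 1 ≤ d) (h3 : ¬ (3 ∣ d))
    (x y : ZMod (3 * d) × ZMod (3 * d))
    (hx : addOrderOf x = d ∨ addOrderOf x = 3 * d)
    (hy : addOrderOf y = d ∨ addOrderOf y = 3 * d) :
    ∃ t : ZMod (3 * d) × ZMod (3 * d), 3 • t = 0 ∧
      addOrderOf (x + t) = 3 * d ∧ addOrderOf (y + t) = 3 * d :=
  stmt_6_general d h3 x y hx hy
end
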